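/- Σ_{n=1}^∞ (−1)^{n−1} / (n · 3^n · C(4n,2n)) = −√3·π/21 + (2/7)·ln 3. -/

import Mathlib

/-!
By the Beta integral, `1 / C(2k, k) = (2k+1) ∫₀¹ (t(1-t))^k dt`. With `k = 2(n+1)` the series
becomes `∫₀¹ ∑ₙ (-1)ⁿ (4 + 1/(n+1)) u^(n+1) dt` for `u = (t(1-t))²/3 ≤ 1/48`, so dominated
convergence lets the sum pass under the integral, and the inner series is `4u/(1+u) + log(1+u)`.
Since `1 + u = (t² - 3t + 3)(t² + t + 1)/3`, this has an elementary primitive built from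
logarithms and arctangents of these two quadratics.
-/

open Real
open scoped Nat

theorem integral_pow_mul_one_sub_pow (a b : ℕ) :
    ∫ x in (0 : ℝ)..1, x ^ a * (1 - x) ^ b = a ! * b ! / (a + b + 1)! := by
  have hGamma := Complex.Gamma_mul_Gamma_eq_betaIntegral (s := a + 1) (t := b + 1)
    (by simp only [Complex.add_re, Complex.natCast_re, Complex.one_re]; positivity)
    (by simp only [Complex.add_re, Complex.natCast_re, Complex.one_re]; positivity)
  rw [show (a + 1 + (b + 1) : ℂ) = (a + b + 1 : ℕ) + 1 by push_cast; ring,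
    Complex.Gamma_nat_eq_factorial, Complex.Gamma_nat_eq_factorial,
    Complex.Gamma_nat_eq_factorial, Complex.betaIntegral] at hGamma
  have hbeta :
      ∫ x in (0 : ℝ)..1, (x : ℂ) ^ ((a : ℂ) + 1 - 1) * (1 - (x : ℂ)) ^ ((b : ℂ) + 1 - 1)
      = ((∫ x in (0 : ℝ)..1, x ^ a * (1 - x) ^ b : ℝ) : ℂ) := by
    rw [← intervalIntegral.integral_ofReal]
    refine intervalIntegral.integral_congr fun x _ ↦ ?_
    simp only [add_sub_cancel_right, Complex.cpow_natCast]
    push_cast; rfl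
  rw [hbeta] at hGamma
  have hReal : (a ! * b ! : ℝ) = (a + b + 1)! * ∫ x in (0 : ℝ)..1, x ^ a * (1 - x) ^ b := by
    exact_mod_cast hGamma
  rw [hReal]
  field_simp

theorem inv_centralBinom_eq_integral (k : ℕ) :
    ((Nat.centralBinom k : ℝ))⁻¹ = (2 * k + 1) * ∫ x in (0 : ℝ)..1, (x * (1 - x)) ^ k := by
  simp_rw [mul_pow]
  rw [integral_pow_mul_one_sub_pow, Nat.centralBinom_eq_two_mul_choose,
    Nat.cast_choose ℝ (by omega : k ≤ 2 * k), show 2 * k - k = k by omega,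
    show k + k + 1 = 2 * k + 1 by omega, Nat.factorial_succ]
  push_cast
  field_simp

theorem neg_one_pow_div_choose_eq_integral (n : ℕ) :
    (-1 : ℝ) ^ n / ((n + 1) * 3 ^ (n + 1) * (Nat.choose (4 * (n + 1)) (2 * (n + 1)) : ℝ)) =
      ∫ t in (0 : ℝ)..1, (-1) ^ n * (4 + 1 / (n + 1)) * ((t * (1 - t)) ^ 2 / 3) ^ (n + 1) := by
  have hC := inv_centralBinom_eq_integral (2 * (n + 1))
  rw [Nat.centralBinom_eq_two_mul_choose, show 2 * (2 * (n + 1)) = 4 * (n + 1) by ring] at hC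
  have hint :
      ∫ t in (0 : ℝ)..1, (-1) ^ n * (4 + 1 / (n + 1)) * ((t * (1 - t)) ^ 2 / 3) ^ (n + 1)
      = (-1) ^ n * (4 + 1 / (n + 1)) / 3 ^ (n + 1) *
        ∫ t in (0 : ℝ)..1, (t * (1 - t)) ^ (2 * (n + 1)) := by
    rw [← intervalIntegral.integral_const_mul]
    congr 1 with t
    rw [div_pow, ← pow_mul]
    ring
  have hI : ∫ t in (0 : ℝ)..1, (t * (1 - t)) ^ (2 * (n + 1))
      = ((Nat.choose (4 * (n + 1)) (2 * (n + 1)) : ℝ))⁻¹ / (2 * (2 * (n + 1) : ℕ) + 1) := by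
    rw [hC]
    field_simp
  rw [hint, hI]
  push_cast
  field_simp
  ring

theorem hasSum_neg_one_pow_mul_add_div_mul_pow {u : ℝ} (hu : |u| < 1) (a b : ℝ) :
    HasSum (fun n : ℕ ↦ (-1) ^ n * (a + b / (n + 1)) * u ^ (n + 1))
      (a * u / (1 + u) + b * log (1 + u)) := by
  have hu' : |-u| < 1 := by rwa [abs_neg]
  have hgeom := (hasSum_geometric_of_abs_lt_one hu').mul_left (a * u)
  have hlog := (hasSum_pow_div_log_of_abs_lt_one hu').mul_left (-b)
  rw [sub_neg_eq_add, ← div_eq_mul_inv] at hgeom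
  rw [sub_neg_eq_add, neg_mul_neg] at hlog
  refine (hgeom.add hlog).congr_fun fun n ↦ ?_
  rw [neg_pow, neg_pow u]
  ring

theorem abs_neg_one_pow_mul_add_div_mul_pow_le {u r : ℝ} (hur : |u| ≤ r) (a b : ℝ) (n : ℕ) :
    |(-1) ^ n * (a + b / (n + 1)) * u ^ (n + 1)| ≤ (|a| + |b|) * r ^ (n + 1) := by
  have hcoef : |a + b / (n + 1)| ≤ |a| + |b| := by
    refine (abs_add_le _ _).trans (add_le_add_right ?_ _)
    rw [abs_div, abs_of_pos (by positivity : (0 : ℝ) < n + 1)]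
    exact div_le_self (abs_nonneg b) (by linarith [n.cast_nonneg (α := ℝ)])
  rw [abs_mul, abs_mul, abs_pow, abs_neg, abs_one, one_pow, one_mul, abs_pow]
  exact mul_le_mul hcoef (pow_le_pow_left₀ (abs_nonneg u) hur _) (by positivity)
    (by positivity)

theorem hasSum_intervalIntegral_neg_one_pow_mul_add_div_mul_pow {u : ℝ → ℝ} {α β r : ℝ}
    (hu : Continuous u) (hr : r < 1) (hur : ∀ t ∈ Set.uIcc α β, |u t| ≤ r) (a b : ℝ) :
    HasSum (fun n : ℕ ↦ ∫ t in α..β, (-1) ^ n * (a + b / (n + 1)) * u t ^ (n + 1))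
      (∫ t in α..β, a * u t / (1 + u t) + b * log (1 + u t)) := by
  have hr0 : 0 ≤ r := (abs_nonneg _).trans (hur α Set.left_mem_uIcc)
  refine intervalIntegral.hasSum_integral_of_dominated_convergence
    (fun n _ ↦ (|a| + |b|) * r ^ (n + 1)) (fun n ↦ by fun_prop)
    (fun n ↦ .of_forall fun t ht ↦ abs_neg_one_pow_mul_add_div_mul_pow_le
      (hur t (Set.uIoc_subset_uIcc ht)) a b n)
    (.of_forall fun _ _ ↦ ?_) intervalIntegrable_const
    (.of_forall fun t ht ↦ hasSum_neg_one_pow_mul_add_div_mul_pow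
      ((hur t (Set.uIoc_subset_uIcc ht)).trans_lt hr) a b)
  simp_rw [pow_succ]
  exact ((summable_geometric_of_lt_one hr0 hr).mul_right r).mul_left _

noncomputable def logArctanPrimitive (t : ℝ) : ℝ :=
  -t * log 3 + (t - 9 / 14) * log (t ^ 2 - 3 * t + 3) + (t - 5 / 14) * log (t ^ 2 + t + 1)
    - √3 / 7 * (arctan ((2 * t - 3) / √3) + arctan ((2 * t + 1) / √3))

theorem hasDerivAt_logArctanPrimitive (t : ℝ) :
    HasDerivAt logArctanPrimitive
      (4 * ((t * (1 - t)) ^ 2 / 3) / (1 + (t * (1 - t)) ^ 2 / 3) + log (1 + (t * (1 - t)) ^ 2 / 3))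
      t := by
  have hP : 0 < t ^ 2 - 3 * t + 3 := by nlinarith [sq_nonneg (t - 3 / 2)]
  have hQ : 0 < t ^ 2 + t + 1 := by nlinarith [sq_nonneg (t + 1 / 2)]
  have hid := hasDerivAt_id t
  have dP : HasDerivAt (fun t ↦ t ^ 2 - 3 * t + 3) (2 * t - 3) t := by
    simpa using ((hasDerivAt_pow 2 t).sub (hid.const_mul 3)).add_const 3
  have dQ : HasDerivAt (fun t ↦ t ^ 2 + t + 1) (2 * t + 1) t := by
    simpa using ((hasDerivAt_pow 2 t).add hid).add_const 1
  have dP' : HasDerivAt (fun t ↦ (2 * t - 3) / √3) (2 / √3) t := by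
    simpa using ((hid.const_mul 2).sub_const 3).div_const √3
  have dQ' : HasDerivAt (fun t ↦ (2 * t + 1) / √3) (2 / √3) t := by
    simpa using ((hid.const_mul 2).add_const 1).div_const √3
  have hF := (((hid.neg.mul_const (log 3)).add ((hid.sub_const (9 / 14)).mul (dP.log hP.ne'))).add
    ((hid.sub_const (5 / 14)).mul (dQ.log hQ.ne'))).sub
    ((dP'.arctan.add dQ'.arctan).const_mul (√3 / 7))
  refine hF.congr_deriv ?_
  have h3 : √3 ^ 2 = 3 := sq_sqrt (by norm_num)
  have hP' : 1 + ((2 * t - 3) / √3) ^ 2 = 4 / 3 * (t ^ 2 - 3 * t + 3) := by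
    rw [div_pow, h3]; ring
  have hQ' : 1 + ((2 * t + 1) / √3) ^ 2 = 4 / 3 * (t ^ 2 + t + 1) := by
    rw [div_pow, h3]; ring
  have hPQ : 1 + (t * (1 - t)) ^ 2 / 3 = (t ^ 2 - 3 * t + 3) * (t ^ 2 + t + 1) / 3 := by ring
  rw [hP', hQ', hPQ, log_div (by positivity) (by norm_num), log_mul hP.ne' hQ.ne']
  -- the quadratics in the shape `field_simp` normalizes them to
  have hP₀ : t * (t - 3) + 3 ≠ 0 := by nlinarith
  have hQ₀ : t * (t + 1) + 1 ≠ 0 := by nlinarith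
  simp only [id]
  field_simp
  ring

theorem logArctanPrimitive_one_sub_zero :
    logArctanPrimitive 1 - logArctanPrimitive 0 = -√3 * π / 21 + 2 / 7 * log 3 := by
  norm_num [logArctanPrimitive, neg_div, arctan_neg, div_sqrt]
  ring

theorem integral_four_mul_div_one_add_add_log_one_add :
    ∫ t in (0 : ℝ)..1,
        4 * ((t * (1 - t)) ^ 2 / 3) / (1 + (t * (1 - t)) ^ 2 / 3) + log (1 + (t * (1 - t)) ^ 2 / 3)
      = -√3 * π / 21 + 2 / 7 * log 3 := by
  rw [intervalIntegral.integral_eq_sub_of_hasDerivAt (fun t _ ↦ hasDerivAt_logArctanPrimitive t)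
    (Continuous.intervalIntegrable (by fun_prop (disch := intro; positivity)) _ _)]
  exact logArctanPrimitive_one_sub_zero

theorem stmt_7 :
    ∑' n : ℕ, (-1 : ℝ) ^ n /
      (((n : ℝ) + 1) * 3 ^ (n + 1) * (Nat.choose (4 * (n + 1)) (2 * (n + 1)) : ℝ)) =
    -Real.sqrt 3 * Real.pi / 21 + (2 / 7) * Real.log 3 := by
  have hbound : ∀ t ∈ Set.uIcc (0 : ℝ) 1, |(t * (1 - t)) ^ 2 / 3| ≤ 1 / 48 := by
    intro t ht
    rw [Set.uIcc_of_le zero_le_one] at ht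
    have h₀ : 0 ≤ t * (1 - t) := mul_nonneg ht.1 (by linarith [ht.2])
    have h₁ : t * (1 - t) ≤ 1 / 4 := by nlinarith [sq_nonneg (t - 1 / 2)]
    rw [abs_of_nonneg (by positivity)]
    nlinarith
  have hsum := hasSum_intervalIntegral_neg_one_pow_mul_add_div_mul_pow
    (u := fun t ↦ (t * (1 - t)) ^ 2 / 3) (by fun_prop) (by norm_num) hbound 4 1
  simp only [one_mul] at hsum
  rw [tsum_congr neg_one_pow_div_choose_eq_integral, hsum.tsum_eq,
    integral_four_mul_div_one_add_add_log_one_add]
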